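/- If features are conditionally independent given the label and feature i satisfies E[xᵢ | y=-1] = E[xᵢ | y=1] = 0, then any minimizer w* of the regularized soft-SVM objective has wᵢ* = 0. -/

import Mathlib

open MeasureTheory Finset
open scoped ENNReal

/-- The joint distribution of `(x,y)` on `ℝ^d × {-1,1}`: with probability `q` the label is `1`
and the features are drawn from the product measure `Measure.pi ηp` (features conditionally
independent given the label), with probability `1-q` the label is `-1` and the features are
drawn from `Measure.pi ηn`. -/
noncomputable def jointMeasure {d : ℕ} (ηp ηn : Fin d → Measure ℝ) (q : ℝ≥0∞) :
    Measure ((Fin d → ℝ) × ℝ) :=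
  q • (Measure.pi ηp).map (fun x => (x, (1 : ℝ))) +
    (1 - q) • (Measure.pi ηn).map (fun x => (x, (-1 : ℝ)))

/-- The regularized soft-SVM objective. -/
noncomputable def svmLoss {d : ℕ} (μ : Measure ((Fin d → ℝ) × ℝ)) (lam : ℝ)
    (w : Fin d → ℝ) : ℝ :=
  (∫ p, max 0 (1 - p.2 * ∑ i, w i * p.1 i) ∂μ) + lam / 2 * ∑ i, (w i) ^ 2

/-! Replacing `wᵢ` by `0` cannot increase the expected hinge loss: given the label and the other
features, `xᵢ` is independent of them with mean zero, so averaging the convex function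
`max 0 (1 - y (w·x))` over `xᵢ` gives at least its value at `xᵢ = 0` (Jensen). The regulariser
drops by `λ wᵢ² / 2`, so minimality forces `wᵢ = 0`. -/

open Function

section ResampleCoordinate

variable {ι : Type*} [Fintype ι] [DecidableEq ι] {X : ι → Type*} [∀ j, MeasurableSpace (X j)]
  (μ : ∀ j, Measure (X j)) [∀ j, IsProbabilityMeasure (μ j)]

theorem measurePreserving_update (i : ι) :
    MeasurePreserving (fun p : (∀ j, X j) × X i => update p.1 i p.2)
      ((Measure.pi μ).prod (μ i)) (Measure.pi μ) where
  measurable := measurable_update'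
  map_eq := by
    refine (Measure.pi_eq fun s hs => ?_).symm
    have hpre : (fun p : (∀ j, X j) × X i => update p.1 i p.2) ⁻¹' Set.univ.pi s
        = Set.univ.pi (update s i Set.univ) ×ˢ s i := by
      ext ⟨x, t⟩
      simp only [Set.mem_preimage, Set.mem_prod, Set.mem_univ_pi]
      rw [forall_update_iff x fun j y => y ∈ s j, forall_update_iff s fun j u => x j ∈ u]
      simp [and_comm]
    have hrest : ∏ j ∈ univ.erase i, μ j (update s i Set.univ j) = ∏ j ∈ univ.erase i, μ j (s j) :=
      prod_congr rfl fun j hj => by rw [update_of_ne (ne_of_mem_erase hj)]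
    rw [Measure.map_apply measurable_update' (MeasurableSet.univ_pi hs), hpre, Measure.prod_prod,
      Measure.pi_pi, ← mul_prod_erase univ _ (mem_univ i), ← mul_prod_erase univ _ (mem_univ i),
      hrest, update_self, measure_univ, one_mul, mul_comm]

theorem integral_eq_integral_integral_update {E : Type*} [NormedAddCommGroup E]
    [NormedSpace ℝ E] (i : ι) {F : (∀ j, X j) → E} (hF : Integrable F (Measure.pi μ)) :
    ∫ x, F x ∂Measure.pi μ = ∫ x, ∫ t, F (update x i t) ∂μ i ∂Measure.pi μ := by
  have h := measurePreserving_update μ i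
  calc ∫ x, F x ∂Measure.pi μ = ∫ p, F (update p.1 i p.2) ∂(Measure.pi μ).prod (μ i) := by
        rw [← integral_map h.measurable.aemeasurable (by rw [h.map_eq]; exact hF.1),
          h.map_eq]
    _ = _ := integral_prod _ (h.integrable_comp_of_integrable hF)

end ResampleCoordinate

theorem max_zero_integral_le {α : Type*} [MeasurableSpace α] {μ : Measure α} {g : α → ℝ}
    (hg : Integrable g μ) : max 0 (∫ x, g x ∂μ) ≤ ∫ x, max 0 (g x) ∂μ :=
  max_le (integral_nonneg fun _ => le_max_left _ _)
    (integral_mono hg (by simpa only [max_comm] using hg.pos_part) fun _ => le_max_right _ _)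

theorem max_zero_le_integral_max_zero_add_mul {ν : Measure ℝ} [IsProbabilityMeasure ν]
    (hν : Integrable (fun t => t) ν) (hmean : ∫ t, t ∂ν = 0) (a b : ℝ) :
    max 0 a ≤ ∫ t, max 0 (a + b * t) ∂ν := by
  have hint : Integrable (fun t => a + b * t) ν := (integrable_const a).add (hν.const_mul b)
  have haffine : ∫ t, (a + b * t) ∂ν = a := by
    rw [integral_add (integrable_const a) (hν.const_mul b), integral_const_mul, hmean]
    simp
  simpa only [haffine] using max_zero_integral_le hint

section Hinge

variable {ι : Type*} [Fintype ι] {η : ι → Measure ℝ} [∀ j, IsProbabilityMeasure (η j)]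

theorem integrable_hinge (hη : ∀ j, Integrable (fun t : ℝ => t) (η j)) (c : ℝ) (w : ι → ℝ) :
    Integrable (fun x : ι → ℝ => max 0 (1 - c * ∑ j, w j * x j)) (Measure.pi η) := by
  have hlin : Integrable (fun x : ι → ℝ => 1 - c * ∑ j, w j * x j) (Measure.pi η) :=
    (integrable_const 1).sub <| (integrable_finsetSum _ fun j _ =>
      (integrable_eval (hη j)).const_mul (w j)).const_mul c
  simpa only [max_comm] using hlin.pos_part

theorem sum_mul_update_eq [DecidableEq ι] (w x : ι → ℝ) (i : ι) (t : ℝ) :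
    ∑ j, w j * update x i t j = ∑ j, update w i 0 j * x j + w i * t := by
  rw [← add_sum_erase _ _ (mem_univ i), ← add_sum_erase _ _ (mem_univ i), update_self,
    update_self, zero_mul, zero_add, add_comm]
  congr 1
  exact sum_congr rfl fun j hj => by
    rw [update_of_ne (ne_of_mem_erase hj), update_of_ne (ne_of_mem_erase hj)]

theorem integral_hinge_update_zero_le [DecidableEq ι]
    (hη : ∀ j, Integrable (fun t : ℝ => t) (η j)) (c : ℝ) (w : ι → ℝ) (i : ι)
    (hmean : ∫ t, t ∂η i = 0) :
    ∫ x, max 0 (1 - c * ∑ j, update w i 0 j * x j) ∂Measure.pi η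
      ≤ ∫ x, max 0 (1 - c * ∑ j, w j * x j) ∂Measure.pi η := by
  have hw := integrable_hinge hη c w
  rw [integral_eq_integral_integral_update η i hw]
  refine integral_mono (integrable_hinge hη c _)
    ((measurePreserving_update η i).integrable_comp_of_integrable hw).integral_prod_left
    fun x => ?_
  simp only [sum_mul_update_eq]
  refine (max_zero_le_integral_max_zero_add_mul (hη i) hmean _ (-(c * w i))).trans_eq ?_
  congr 1 with t
  ring_nf

end Hinge

theorem integral_jointMeasure {d : ℕ} (ηp ηn : Fin d → Measure ℝ) {q : ℝ≥0∞} (hq : q ≤ 1)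
    {F : (Fin d → ℝ) × ℝ → ℝ} (hFp : Integrable (fun x => F (x, 1)) (Measure.pi ηp))
    (hFn : Integrable (fun x => F (x, -1)) (Measure.pi ηn)) :
    ∫ p, F p ∂jointMeasure ηp ηn q
      = q.toReal * ∫ x, F (x, 1) ∂Measure.pi ηp
        + (1 - q).toReal * ∫ x, F (x, -1) ∂Measure.pi ηn := by
  have hq_ne_top : q ≠ ∞ := ne_top_of_le_ne_top ENNReal.one_ne_top hq
  have hemb (y : ℝ) := measurableEmbedding_prod_mk_right (β := Fin d → ℝ) y
  rw [jointMeasure, integral_add_measure, integral_smul_measure, integral_smul_measure,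
    (hemb 1).integral_map, (hemb (-1)).integral_map, smul_eq_mul, smul_eq_mul]
  · exact ((hemb 1).integrable_map_iff.mpr hFp).smul_measure hq_ne_top
  · exact ((hemb (-1)).integrable_map_iff.mpr hFn).smul_measure (by simp)

theorem integral_jointMeasure_hinge {d : ℕ} (ηp ηn : Fin d → Measure ℝ)
    [∀ j, IsProbabilityMeasure (ηp j)] [∀ j, IsProbabilityMeasure (ηn j)] {q : ℝ≥0∞} (hq : q ≤ 1)
    (hp : ∀ j, Integrable (fun t : ℝ => t) (ηp j)) (hn : ∀ j, Integrable (fun t : ℝ => t) (ηn j))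
    (w : Fin d → ℝ) :
    ∫ p, max 0 (1 - p.2 * ∑ j, w j * p.1 j) ∂jointMeasure ηp ηn q
      = q.toReal * ∫ x, max 0 (1 - 1 * ∑ j, w j * x j) ∂Measure.pi ηp
        + (1 - q).toReal * ∫ x, max 0 (1 - (-1) * ∑ j, w j * x j) ∂Measure.pi ηn :=
  integral_jointMeasure ηp ηn hq (integrable_hinge hp 1 w) (integrable_hinge hn (-1) w)

theorem sum_sq_update_zero {ι : Type*} [Fintype ι] [DecidableEq ι] (w : ι → ℝ) (i : ι) :
    ∑ j, update w i 0 j ^ 2 = ∑ j, w j ^ 2 - w i ^ 2 := by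
  rw [← add_sum_erase _ _ (mem_univ i), ← add_sum_erase _ _ (mem_univ i), update_self,
    zero_pow two_ne_zero, zero_add, add_sub_cancel_left]
  exact sum_congr rfl fun j hj => by rw [update_of_ne (ne_of_mem_erase hj)]

/-- with features conditionally independent given the label, if feature `i`
satisfies `E[xᵢ|y=-1] = E[xᵢ|y=1] = 0`, then any minimizer `w*` of the regularized soft-SVM
objective has `wᵢ* = 0`. -/
theorem svm_minimizer_zero_mean_feature {d : ℕ} (ηp ηn : Fin d → Measure ℝ)
    [∀ i, IsProbabilityMeasure (ηp i)] [∀ i, IsProbabilityMeasure (ηn i)]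
    (q : ℝ≥0∞) (hq : q ≤ 1) (lam : ℝ) (hlam : 0 < lam)
    (hip : ∀ j, Integrable (fun t : ℝ => t) (ηp j))
    (hin : ∀ j, Integrable (fun t : ℝ => t) (ηn j))
    (wstar : Fin d → ℝ)
    (hmin : ∀ w, svmLoss (jointMeasure ηp ηn q) lam wstar ≤
      svmLoss (jointMeasure ηp ηn q) lam w)
    (i : Fin d)
    (hmeanp : (∫ t, t ∂(ηp i)) = 0) (hmeann : (∫ t, t ∂(ηn i)) = 0) :
    wstar i = 0 := by
  have hhinge :
      ∫ p, max 0 (1 - p.2 * ∑ j, update wstar i 0 j * p.1 j) ∂jointMeasure ηp ηn q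
        ≤ ∫ p, max 0 (1 - p.2 * ∑ j, wstar j * p.1 j) ∂jointMeasure ηp ηn q := by
    rw [integral_jointMeasure_hinge ηp ηn hq hip hin, integral_jointMeasure_hinge ηp ηn hq hip hin]
    gcongr _ * ?_ + _ * ?_
    · exact integral_hinge_update_zero_le hip 1 wstar i hmeanp
    · exact integral_hinge_update_zero_le hin (-1) wstar i hmeann
  have hloss := hmin (update wstar i 0)
  rw [svmLoss, svmLoss, sum_sq_update_zero] at hloss
  have hsq : wstar i ^ 2 ≤ 0 := by nlinarith
  exact pow_eq_zero_iff two_ne_zero |>.mp (le_antisymm hsq (sq_nonneg _))
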